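/- arXiv:1110.3641 — 6 statements merged into one kernel-verified Lean document; each statement's English description precedes it below -/
import Mathlib

section
/- There exists a matrix polynomial A(x) of degree d ≥ 1 with n×n coefficients (n ≥ 2) such that col(A) has full column rank and row(A) has full row rank, but A(x) is singular (det A(x) ≡ 0). -/
/-!
The polynomial matrix `A(x) = (1, x)ᵀ (1, x) = !![1, x; x, x²]` has rank one, so its determinant
vanishes identically. Yet the first rows of `A₀` and `A₁` form an identity block of `col(A)`, and
their first columns an identity block of `row(A)`, so both have full rank.
-/

open Matrix Polynomial

namespace Matrix

variable {m n R : Type*} [Fintype n] [CommSemiring R] [StrongRankCondition R]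

theorem rank_eq_card_width_of_submatrix_eq_one [DecidableEq n] (A : Matrix m n R)
    (r : n → m) (h : A.submatrix r id = 1) : A.rank = Fintype.card n :=
  le_antisymm A.rank_le_card_width (by simpa [h] using A.rank_submatrix_le r id)

theorem rank_eq_card_height_of_submatrix_eq_one [Fintype m] [DecidableEq m] (A : Matrix m n R)
    (c : m → n) (h : A.submatrix id c = 1) : A.rank = Fintype.card m :=
  le_antisymm A.rank_le_card_height (by simpa [h] using A.rank_submatrix_le id c)

end Matrix

def rankOneCoeff (R : Type*) [CommRing R] : ℕ → Matrix (Fin 2) (Fin 2) R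
  | 0 => !![1, 0; 0, 0]
  | 1 => !![0, 1; 1, 0]
  | 2 => !![0, 0; 0, 1]
  | _ => 0

variable (R : Type*) [CommRing R]

theorem sum_rankOneCoeff_eq_vecMulVec :
    (Matrix.of fun i j => ∑ k ∈ Finset.range 3, C (rankOneCoeff R k i j) * X ^ k) =
      vecMulVec ![1, X] ![1, X] := by
  ext i j
  fin_cases i <;> fin_cases j <;> simp [Finset.sum_range_succ, rankOneCoeff, vecMulVec, sq]

theorem det_sum_rankOneCoeff :
    (Matrix.of fun i j => ∑ k ∈ Finset.range 3, C (rankOneCoeff R k i j) * X ^ k).det = 0 := by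
  rw [sum_rankOneCoeff_eq_vecMulVec, det_vecMulVec]

variable [Nontrivial R]

theorem rank_col_rankOneCoeff :
    (Matrix.of fun (p : Fin 3 × Fin 2) (j : Fin 2) => rankOneCoeff R p.1 p.2 j).rank = 2 := by
  refine (rank_eq_card_width_of_submatrix_eq_one _ ![(0, 0), (1, 0)] ?_).trans (Fintype.card_fin 2)
  ext i j
  fin_cases i <;> fin_cases j <;> simp [rankOneCoeff]

theorem rank_row_rankOneCoeff :
    (Matrix.of fun (i : Fin 2) (q : Fin 3 × Fin 2) => rankOneCoeff R q.1 i q.2).rank = 2 := by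
  refine (rank_eq_card_height_of_submatrix_eq_one _ ![(0, 0), (1, 0)] ?_).trans (Fintype.card_fin 2)
  ext i j
  fin_cases i <;> fin_cases j <;> simp [rankOneCoeff]

/-- There is a singular matrix polynomial (with `n ≥ 2`, `d ≥ 1`) whose `col` has full
column rank and whose `row` has full row rank. -/
theorem stmt_2 :
    ∃ (n d : ℕ) (A : ℕ → Matrix (Fin n) (Fin n) ℂ),
      2 ≤ n ∧ 1 ≤ d ∧
      (Matrix.of fun (p : Fin (d + 1) × Fin n) (j : Fin n) => A p.1 p.2 j).rank = n ∧
      (Matrix.of fun (i : Fin n) (q : Fin (d + 1) × Fin n) => A q.1 i q.2).rank = n ∧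
      Matrix.det (Matrix.of fun i j =>
        ∑ k ∈ Finset.range (d + 1), Polynomial.C (A k i j) * Polynomial.X ^ k) = 0 :=
  ⟨2, 2, rankOneCoeff ℂ, le_rfl, by norm_num, rank_col_rankOneCoeff ℂ, rank_row_rankOneCoeff ℂ,
    det_sum_rankOneCoeff ℂ⟩
end

section
/- Let L(λ,μ) = μL_0 − λL_1 and M(λ,μ) = μM_0 − λM_1 be N×N complex matrix pencils with M_1 L_0 = M_0 L_1 and [M_0 −M_1] (the N×2N matrix) of full row rank N. If L is regular (det(μL_0 − λL_1) not identically zero as a homogeneous polynomial) then for any (α,β) with L(α,β) invertible, M(α,β) is also invertible. -/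
/-!
The relation `M₁L₀ = M₀L₁` gives `M₀ L(α,β) = M(α,β) L₀` and `M₁ L(α,β) = M(α,β) L₁`. So when
`L(α,β)` is invertible, every left null vector `v` of `M(α,β)` satisfies `v M₀ = v M₁ = 0`, i.e.
`v [M₀ −M₁] = 0`, and full row rank of `[M₀ −M₁]` forces `v = 0`.
-/

open Matrix

namespace Matrix

variable {m n K R : Type*}

theorem linearIndependent_row_of_rank_eq_card [Field K] [Fintype m] [Fintype n]
    {A : Matrix m n K} (h : A.rank = Fintype.card m) : LinearIndependent K A.row := by
  rw [linearIndependent_iff_card_eq_finrank_span, Set.finrank, ← rank_eq_finrank_span_row, h]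

theorem vecMul_injective_of_rank_eq_card [Field K] [Fintype m] [Fintype n]
    {A : Matrix m n K} (h : A.rank = Fintype.card m) : Function.Injective A.vecMul :=
  vecMul_injective_iff.2 (linearIndependent_row_of_rank_eq_card h)

section Pencil

variable [CommRing R] [Fintype n] {L0 L1 M0 M1 : Matrix n n R}

theorem mul_pencil_eq_pencil_mul_left (h : M1 * L0 = M0 * L1) (α β : R) :
    M0 * (β • L0 - α • L1) = (β • M0 - α • M1) * L0 := by
  simp only [Matrix.mul_sub, Matrix.sub_mul, Matrix.mul_smul, Matrix.smul_mul, h]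

theorem mul_pencil_eq_pencil_mul_right (h : M1 * L0 = M0 * L1) (α β : R) :
    M1 * (β • L0 - α • L1) = (β • M0 - α • M1) * L1 := by
  simp only [Matrix.mul_sub, Matrix.sub_mul, Matrix.mul_smul, Matrix.smul_mul, h]

theorem vecMul_eq_zero_of_vecMul_pencil_eq_zero [DecidableEq n] (h : M1 * L0 = M0 * L1)
    {α β : R} (hL : IsUnit (β • L0 - α • L1)) {v : n → R}
    (hv : v ᵥ* (β • M0 - α • M1) = 0) : v ᵥ* M0 = 0 ∧ v ᵥ* M1 = 0 := by
  constructor <;> refine vecMul_injective_of_isUnit hL ?_ <;>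
    simp only [vecMul_vecMul, zero_vecMul, mul_pencil_eq_pencil_mul_left h,
      mul_pencil_eq_pencil_mul_right h, ← vecMul_vecMul _ _ L0, ← vecMul_vecMul _ _ L1, hv]

end Pencil

end Matrix

theorem stmt_3_general (N : ℕ) (L0 L1 M0 M1 : Matrix (Fin N) (Fin N) ℂ)
    (h1 : M1 * L0 = M0 * L1)
    (h2 : (Matrix.fromCols M0 (-M1)).rank = N) :
    ∀ α β : ℂ, IsUnit (β • L0 - α • L1) → IsUnit (β • M0 - α • M1) := by
  intro α β hL
  have hinj : Function.Injective (fromCols M0 (-M1)).vecMul :=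
    vecMul_injective_of_rank_eq_card (h2.trans (Fintype.card_fin N).symm)
  rw [← vecMul_injective_iff_isUnit, ← coe_vecMulLinear]
  refine (injective_iff_map_eq_zero _).2 fun v hv => hinj ?_
  obtain ⟨hv0, hv1⟩ := vecMul_eq_zero_of_vecMul_pencil_eq_zero h1 hL hv
  simp [vecMul_fromCols, hv0, vecMul_neg, hv1]

/-- Left duality: if `M₁L₀ = M₀L₁`, `[M₀ −M₁]` has full row rank and the pencil `L`
is regular, then `M(α,β)` is invertible whenever `L(α,β)` is. -/
theorem stmt_3 (N : ℕ) (L0 L1 M0 M1 : Matrix (Fin N) (Fin N) ℂ)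
    (h1 : M1 * L0 = M0 * L1)
    (h2 : (Matrix.fromCols M0 (-M1)).rank = N)
    (hreg : ∃ a b : ℂ, IsUnit (b • L0 - a • L1)) :
    ∀ α β : ℂ, IsUnit (β • L0 - α • L1) → IsUnit (β • M0 - α • M1) :=
  stmt_3_general N L0 L1 M0 M1 h1 h2
end

section
/- Let A(λ,μ) be a matrix polynomial such that col(A) = [A_0; A_1; …; A_d] has full column rank n, and let W ∈ ℂ^{dn×(d+1)n} be any full-row-rank matrix with W·col(A) = 0. Define W_0 = W·[0_{n×dn}; I_{dn}] and W_1 = W·[I_{dn}; 0_{n×dn}]. Then W_1 C_0 = W_0 C_1, where C_0, C_1 are the second companion form matrices of A. -/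
open Matrix

/-- `C₀ = diag(A₀, I, …, I)` (second companion form). -/
noncomputable def compC0 (n d : ℕ) (A : ℕ → Matrix (Fin n) (Fin n) ℂ) :
    Matrix (Fin d × Fin n) (Fin d × Fin n) ℂ :=
  Matrix.of fun p q =>
    if p.1 = q.1 then
      (if (p.1 : ℕ) = 0 then A 0 p.2 q.2 else if p.2 = q.2 then 1 else 0)
    else 0

/-- `C₁` with first block column `(−A₁, …, −A_d)ᵀ` and identity superdiagonal blocks. -/
noncomputable def compC1 (n d : ℕ) (A : ℕ → Matrix (Fin n) (Fin n) ℂ) :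
    Matrix (Fin d × Fin n) (Fin d × Fin n) ℂ :=
  Matrix.of fun p q =>
    (if (q.1 : ℕ) = 0 then -(A ((p.1 : ℕ) + 1) p.2 q.2) else 0) +
    (if (q.1 : ℕ) = (p.1 : ℕ) + 1 ∧ p.2 = q.2 then 1 else 0)

/-- `col A = [A₀; A₁; …; A_d]`. -/
noncomputable def colA (n d : ℕ) (A : ℕ → Matrix (Fin n) (Fin n) ℂ) :
    Matrix (Fin (d + 1) × Fin n) (Fin n) ℂ :=
  Matrix.of fun p j => A p.1 p.2 j

/-- The `(d+1)n × dn` block matrix `[0_{n×dn}; I_{dn}]`. -/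
noncomputable def blkLow (n d : ℕ) : Matrix (Fin (d + 1) × Fin n) (Fin d × Fin n) ℂ :=
  Matrix.of fun p q => if (p.1 : ℕ) = (q.1 : ℕ) + 1 ∧ p.2 = q.2 then 1 else 0

/-- The `(d+1)n × dn` block matrix `[I_{dn}; 0_{n×dn}]`. -/
noncomputable def blkHigh (n d : ℕ) : Matrix (Fin (d + 1) × Fin n) (Fin d × Fin n) ℂ :=
  Matrix.of fun p q => if (p.1 : ℕ) = (q.1 : ℕ) ∧ p.2 = q.2 then 1 else 0

/-!
The whole identity comes from the block equation
`[I; 0] C₀ = [0; I] C₁ + col(A) [I 0 ⋯ 0]`: the last term is killed by `W`.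
-/

section Companion

variable {n d : ℕ} {ι : Type*}

noncomputable def firstBlockRow (n d : ℕ) : Matrix (Fin n) (Fin d × Fin n) ℂ :=
  Matrix.of fun j q => if (q.1 : ℕ) = 0 ∧ j = q.2 then 1 else 0

lemma blkHigh_mul_apply (M : Matrix (Fin d × Fin n) ι ℂ) (i : Fin (d + 1)) (a : Fin n) (c : ι) :
    (blkHigh n d * M) (i, a) c = if h : (i : ℕ) < d then M (⟨i, h⟩, a) c else 0 := by
  simp only [blkHigh, mul_apply, of_apply, ite_mul, one_mul, zero_mul, Fintype.sum_prod_type]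
  split_ifs with h
  · rw [Finset.sum_eq_single ⟨i, h⟩ (fun k _ hk => Finset.sum_eq_zero fun b _ =>
      if_neg (by rintro ⟨e, -⟩; exact hk (Fin.ext e.symm))) (by simp)]
    simp
  · exact Finset.sum_eq_zero fun k _ => Finset.sum_eq_zero fun b _ =>
      if_neg (by rintro ⟨e, -⟩; omega)

lemma blkLow_mul_apply_zero (M : Matrix (Fin d × Fin n) ι ℂ) (a : Fin n) (c : ι) :
    (blkLow n d * M) (0, a) c = 0 := by
  simp [blkLow, mul_apply]

lemma blkLow_mul_apply_succ (M : Matrix (Fin d × Fin n) ι ℂ) (k : Fin d) (a : Fin n) (c : ι) :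
    (blkLow n d * M) (k.succ, a) c = M (k, a) c := by
  simp [blkLow, mul_apply, ite_and, Fin.val_inj, Fintype.sum_prod_type]

lemma colA_mul_firstBlockRow_apply (A : ℕ → Matrix (Fin n) (Fin n) ℂ) (i : Fin (d + 1))
    (a : Fin n) (q : Fin d × Fin n) :
    (colA n d A * firstBlockRow n d) (i, a) q = if (q.1 : ℕ) = 0 then A i a q.2 else 0 := by
  simp [colA, firstBlockRow, mul_apply, ite_and]

lemma blkHigh_mul_compC0 (A : ℕ → Matrix (Fin n) (Fin n) ℂ) :
    blkHigh n d * compC0 n d A =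
      blkLow n d * compC1 n d A + colA n d A * firstBlockRow n d := by
  ext ⟨i, a⟩ ⟨j, b⟩
  rw [Matrix.add_apply, blkHigh_mul_apply, colA_mul_firstBlockRow_apply]
  cases i using Fin.cases with
  | zero =>
    have hd : 0 < d := j.pos
    simp [blkLow_mul_apply_zero, hd, compC0, eq_comm, Fin.ext_iff]
  | succ k =>
    rw [blkLow_mul_apply_succ]
    simp only [compC0, compC1, of_apply, Fin.val_succ, Fin.ext_iff, Nat.add_one_ne_zero, if_false]
    split_ifs <;> first | omega | ring

end Companion

theorem stmt_10_general (n d : ℕ) (A : ℕ → Matrix (Fin n) (Fin n) ℂ)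
    (W : Matrix (Fin d × Fin n) (Fin (d + 1) × Fin n) ℂ)
    (hWA : W * colA n d A = 0) :
    W * blkHigh n d * compC0 n d A = W * blkLow n d * compC1 n d A := by
  calc W * blkHigh n d * compC0 n d A
      = W * (blkLow n d * compC1 n d A) + W * colA n d A * firstBlockRow n d := by
        rw [Matrix.mul_assoc, blkHigh_mul_compC0, Matrix.mul_add, Matrix.mul_assoc]
    _ = W * blkLow n d * compC1 n d A := by
        rw [hWA, Matrix.zero_mul, add_zero, Matrix.mul_assoc]

/-- With `W₀ = W[0; I]` and `W₁ = W[I; 0]`, one has `W₁C₀ = W₀C₁`: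
the pencil `μW₀ − λW₁` is a left dual of the second companion form. -/
theorem stmt_10 (n d : ℕ) (A : ℕ → Matrix (Fin n) (Fin n) ℂ)
    (W : Matrix (Fin d × Fin n) (Fin (d + 1) × Fin n) ℂ)
    (hcol : (colA n d A).rank = n)
    (hW : W.rank = d * n)
    (hWA : W * colA n d A = 0) :
    W * blkHigh n d * compC0 n d A = W * blkLow n d * compC1 n d A :=
  stmt_10_general n d A W hWA
end

section
/- Let L_0, L_1 ∈ ℂ^{m×m} and suppose [L_0; L_1] = Π [Y; Z] where Π is a 2m×2m permutation matrix and Y ∈ ℂ^{m×m} is invertible. Define [M_1 −M_0] = [−Z Y^{-1}, I_m] Π^{-1}. Then M_1 L_0 = M_0 L_1 and [M_0 −M_1] has full row rank m. -/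
/-!
Since `Π⁻¹` cancels `Π`, `[M₁ −M₀][L₀; L₁] = [−ZY⁻¹, I][Y; Z] = −ZY⁻¹Y + Z = 0`, which is
`M₁L₀ = M₀L₁`. For the rank: `[M₀ −M₁]` is `[M₁ −M₀]` times the invertible signed block swap, and
`[M₁ −M₀] = [−ZY⁻¹, I]Π⁻¹` with `Π` invertible, while `[−ZY⁻¹, I]` has the right inverse `[0; I]`.
-/

open Matrix

namespace Matrix

variable {k m R : Type*} [CommRing R]

theorem isUnit_det_of_apply_eq_ite [Fintype m] [DecidableEq m] {P : Matrix m m R}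
    (σ : Equiv.Perm m) (hσ : ∀ i j, P i j = if σ j = i then 1 else 0) : IsUnit P.det := by
  have hP : P = σ⁻¹.permMatrix R := by
    ext i j
    simp [hσ, PEquiv.toMatrix_apply, Equiv.eq_symm_apply, eq_comm]
  rw [hP, det_permutation]
  exact (Equiv.Perm.sign σ⁻¹).isUnit.map (Int.castRingHom R)

theorem rank_eq_card_of_mul_eq_one [Fintype k] [Fintype m] [DecidableEq k]
    [StrongRankCondition R] {A : Matrix k m R} {B : Matrix m k R} (h : A * B = 1) :
    A.rank = Fintype.card k :=
  le_antisymm A.rank_le_card_height (by simpa [h, rank_one] using A.rank_mul_le_left B)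

theorem rank_fromCols_one [Fintype k] [Fintype m] [DecidableEq k] [StrongRankCondition R]
    (A : Matrix k m R) : (fromCols A (1 : Matrix k k R)).rank = Fintype.card k :=
  rank_eq_card_of_mul_eq_one (B := fromRows 0 1) (by simp [fromCols_mul_fromRows])

theorem rank_fromCols_neg_comm [Fintype m] [DecidableEq m] (A B : Matrix k m R) :
    (fromCols B (-A)).rank = (fromCols A (-B)).rank := by
  set J : Matrix (m ⊕ m) (m ⊕ m) R := fromBlocks 0 (-1) (-1) 0
  have hJJ : J * J = 1 := by simp [J, fromBlocks_multiply, ← fromBlocks_one]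
  have hBA : fromCols B (-A) = fromCols A (-B) * J := by simp [J, fromCols_mul_fromBlocks]
  rw [hBA, rank_mul_eq_left_of_isUnit_det _ _ (isUnit_det_of_right_inverse hJJ)]

theorem fromCols_neg_mul_inv_one_mul_fromRows [Fintype k] [Fintype m] [DecidableEq k]
    [DecidableEq m] {Y : Matrix m m R} (hY : IsUnit Y.det) (Z : Matrix k m R) :
    fromCols (-(Z * Y⁻¹)) (1 : Matrix k k R) * fromRows Y Z = 0 := by
  simp [fromCols_mul_fromRows, Matrix.mul_assoc, nonsing_inv_mul _ hY]

end Matrix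

/-- Constructing a dual from a nonsingular submatrix: if `[L₀; L₁] = Π[Y; Z]` with `Π`
a permutation matrix and `Y` invertible, and `[M₁ −M₀] = [−ZY⁻¹, I]Π⁻¹`, then
`M₁L₀ = M₀L₁` and `[M₀ −M₁]` has full row rank. -/
theorem stmt_13 (m : ℕ) (L0 L1 Y Z M0 M1 : Matrix (Fin m) (Fin m) ℂ)
    (P : Matrix (Fin m ⊕ Fin m) (Fin m ⊕ Fin m) ℂ)
    (hP : ∃ σ : Equiv.Perm (Fin m ⊕ Fin m), ∀ i j, P i j = if σ j = i then 1 else 0)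
    (hY : IsUnit Y)
    (hL : Matrix.fromRows L0 L1 = P * Matrix.fromRows Y Z)
    (hM : Matrix.fromCols M1 (-M0) = Matrix.fromCols (-(Z * Y⁻¹)) 1 * P⁻¹) :
    M1 * L0 = M0 * L1 ∧ (Matrix.fromCols M0 (-M1)).rank = m := by
  obtain ⟨σ, hσ⟩ := hP
  have hPdet : IsUnit P.det := isUnit_det_of_apply_eq_ite σ hσ
  have hYdet : IsUnit Y.det := (isUnit_iff_isUnit_det Y).mp hY
  -- With the untyped `1`, the product in `hM` elaborates through the `CStarMatrix`
  -- multiplication instance, which `rw` does not see through.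
  replace hM : fromCols M1 (-M0) = fromCols (-(Z * Y⁻¹)) (1 : Matrix (Fin m) (Fin m) ℂ) * P⁻¹ :=
    hM
  have hML : fromCols M1 (-M0) * fromRows L0 L1 = 0 := by
    rw [hM, hL, Matrix.mul_assoc, nonsing_inv_mul_cancel_left _ _ hPdet,
      fromCols_neg_mul_inv_one_mul_fromRows hYdet]
  refine ⟨?_, ?_⟩
  · rwa [fromCols_mul_fromRows, Matrix.neg_mul, add_neg_eq_zero] at hML
  · rw [rank_fromCols_neg_comm, hM,
      rank_mul_eq_left_of_isUnit_det _ _ (isUnit_nonsing_inv_det _ hPdet), rank_fromCols_one,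
      Fintype.card_fin]
end

section
/- Let L, M be N×N pencils with M₁L₀ = M₀L₁, [M₀ −M₁] of full row rank, and L regular. If ĥx ∈ ℂ^N is a right eigenvector of L at (λ,μ), i.e. (μL₀ − λL₁)ĥx = 0, and (α,β) is such that both L(α,β) and M(α,β) are invertible, then L(α,β)ĥx is a right eigenvector of M at (λ,μ), i.e. (μM₀ − λM₁)·L(α,β)·ĥx = 0. -/
open Matrix

theorem pencil_mul_pencil_comm {R A : Type*} [CommRing R] [Ring A] [Algebra R A]
    {L0 L1 M0 M1 : A} (h : M1 * L0 = M0 * L1) (l m α β : R) :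
    (m • M0 - l • M1) * (β • L0 - α • L1) = (β • M0 - α • M1) * (m • L0 - l • L1) := by
  simp only [sub_mul, mul_sub, smul_mul_assoc, mul_smul_comm, h]
  module

theorem stmt_18_general (N : ℕ) (L0 L1 M0 M1 : Matrix (Fin N) (Fin N) ℂ)
    (h1 : M1 * L0 = M0 * L1)
    (l m α β : ℂ) (xh : Fin N → ℂ)
    (hx : (m • L0 - l • L1) *ᵥ xh = 0) :
    (m • M0 - l • M1) *ᵥ ((β • L0 - α • L1) *ᵥ xh) = 0 := by
  rw [mulVec_mulVec, pencil_mul_pencil_comm h1, ← mulVec_mulVec, hx, mulVec_zero]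

/-- Eigenvector recovery under left duality: if `(μL₀ − λL₁)x̂ = 0` and both `L(α,β)`
and `M(α,β)` are invertible, then `L(α,β)x̂` is a right eigenvector of `M` at `(λ,μ)`. -/
theorem stmt_18 (N : ℕ) (L0 L1 M0 M1 : Matrix (Fin N) (Fin N) ℂ)
    (h1 : M1 * L0 = M0 * L1)
    (h2 : (Matrix.fromCols M0 (-M1)).rank = N)
    (hreg : ∃ a b : ℂ, IsUnit (b • L0 - a • L1))
    (l m α β : ℂ) (xh : Fin N → ℂ)
    (hx : (m • L0 - l • L1) *ᵥ xh = 0)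
    (hL : IsUnit (β • L0 - α • L1)) (hM : IsUnit (β • M0 - α • M1)) :
    (m • M0 - l • M1) *ᵥ ((β • L0 - α • L1) *ᵥ xh) = 0 :=
  stmt_18_general N L0 L1 M0 M1 h1 l m α β xh hx
end

section
/- Let A(λ,μ) be regular of degree d with n×n coefficients and let W be a full-row-rank matrix with W·col(A) = 0. A pencil L(λ,μ) = μL₀ − λL₁ of size dn satisfies W₀L₁ = W₁L₀ (i.e., L is a right dual candidate of W(λ,μ)) if and only if there exists Z ∈ ℂ^{n×dn} with [0_{n×dn}; I_{dn}]L₁ − [I_{dn}; 0_{n×dn}]L₀ = col(A)·Z. -/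
/-!
Regularity of `A` makes `col(A)` injective: some combination `∑ aⁱ b^{d-i} Aᵢ` is invertible
and kills the kernel of `col(A)`. Hence the kernel of `W`, which contains the column span of
`col(A)` and has dimension `(d+1)n - dn = n` by rank–nullity, is exactly that span. The condition
`W₀L₁ = W₁L₀` says that `W` annihilates `[0; I]L₁ - [I; 0]L₀`, i.e. that every column of this
matrix lies in the span of `col(A)`, which is the factorization `col(A) Z`.
-/

open Matrix

namespace Matrix

variable {R : Type*} [CommRing R] {m r c s : Type*} [Fintype c] [Fintype s]

theorem exists_eq_mul_iff_range_le (C : Matrix r c R) (M : Matrix r s R) :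
    (∃ Z : Matrix c s R, M = C * Z) ↔ LinearMap.range M.mulVecLin ≤ LinearMap.range C.mulVecLin := by
  constructor
  · rintro ⟨Z, rfl⟩
    rw [mulVecLin_mul, LinearMap.range_comp]
    exact LinearMap.map_le_range
  · intro hle
    classical
    obtain ⟨h, hh⟩ := Module.projective_lifting_property C.mulVecLin.rangeRestrict
      (M.mulVecLin.codRestrict _ fun v => hle (LinearMap.mem_range_self _ v))
      C.mulVecLin.surjective_rangeRestrict
    refine ⟨LinearMap.toMatrix' h, toLin'.injective ?_⟩
    rw [toLin'_mul, toLin'_toMatrix', toLin'_apply', toLin'_apply']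
    exact LinearMap.ext fun v => congr_arg Subtype.val (LinearMap.congr_fun hh v).symm

theorem mul_eq_zero_iff_range_le_ker [Fintype r] (W : Matrix m r R) (M : Matrix r s R) :
    W * M = 0 ↔ LinearMap.range M.mulVecLin ≤ LinearMap.ker W.mulVecLin := by
  classical
  rw [LinearMap.range_le_ker_iff, ← mulVecLin_mul, ← toLin'_apply', LinearEquiv.map_eq_zero_iff]

variable {K : Type*} [Field K]

theorem ker_mulVecLin_eq_range_of_rank_add_card [Fintype r] (W : Matrix m r K) (C : Matrix r c K)
    (hWC : W * C = 0) (hC : Function.Injective C.mulVec)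
    (hrank : W.rank + Fintype.card c = Fintype.card r) :
    LinearMap.ker W.mulVecLin = LinearMap.range C.mulVecLin := by
  have hle : LinearMap.range C.mulVecLin ≤ LinearMap.ker W.mulVecLin :=
    (mul_eq_zero_iff_range_le_ker W C).mp hWC
  have hnullity := LinearMap.finrank_range_add_finrank_ker W.mulVecLin
  rw [← rank, Module.finrank_fintype_fun_eq_card, ← hrank] at hnullity
  refine (Submodule.eq_of_le_of_finrank_le hle ?_).symm
  rw [LinearMap.finrank_range_of_inj hC, Module.finrank_fintype_fun_eq_card]
  omega

theorem mul_eq_zero_iff_exists_eq_mul [Fintype r]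
    {W : Matrix m r K} {C : Matrix r c K}
    (hker : LinearMap.ker W.mulVecLin = LinearMap.range C.mulVecLin) (M : Matrix r s K) :
    W * M = 0 ↔ ∃ Z : Matrix c s K, M = C * Z := by
  rw [mul_eq_zero_iff_range_le_ker, exists_eq_mul_iff_range_le, hker]

end Matrix

theorem colA_mulVec_injective {n d : ℕ} {A : ℕ → Matrix (Fin n) (Fin n) ℂ} {coeff : ℕ → ℂ}
    (hunit : IsUnit (∑ i ∈ Finset.range (d + 1), coeff i • A i)) :
    Function.Injective (colA n d A).mulVec := by
  rw [← coe_mulVecLin, injective_iff_map_eq_zero]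
  intro v hv
  have hA : ∀ i ≤ d, A i *ᵥ v = 0 := fun i hi => funext fun k => congr_fun hv (⟨i, by omega⟩, k)
  apply mulVec_injective_iff_isUnit.mpr hunit
  rw [mulVec_zero, sum_mulVec]
  refine Finset.sum_eq_zero fun i hi => ?_
  rw [smul_mulVec, hA i (Nat.lt_succ_iff.mp (Finset.mem_range.mp hi)), smul_zero]

/-- A pencil `L(λ,μ) = μL₀ − λL₁` satisfies `W₀L₁ = W₁L₀` (with `W₀ = W[0; I]`,
`W₁ = W[I; 0]`) if and only if `[0; I]L₁ − [I; 0]L₀ = col A ⬝ Z` for some `Z`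
(the row-shifted-sum characterization generalizing `𝕃₂`). -/
theorem stmt_19 (n d : ℕ) (A : ℕ → Matrix (Fin n) (Fin n) ℂ)
    (hreg : ∃ a b : ℂ,
      IsUnit (∑ i ∈ Finset.range (d + 1), (a ^ i * b ^ (d - i)) • A i))
    (W : Matrix (Fin d × Fin n) (Fin (d + 1) × Fin n) ℂ)
    (hW : W.rank = d * n)
    (hWA : W * colA n d A = 0)
    (L0 L1 : Matrix (Fin d × Fin n) (Fin d × Fin n) ℂ) :
    W * blkLow n d * L1 = W * blkHigh n d * L0 ↔
      ∃ Z : Matrix (Fin n) (Fin d × Fin n) ℂ,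
        blkLow n d * L1 - blkHigh n d * L0 = colA n d A * Z := by
  obtain ⟨a, b, hunit⟩ := hreg
  have hker := ker_mulVecLin_eq_range_of_rank_add_card W (colA n d A) hWA
    (colA_mulVec_injective hunit) (by simp [hW, add_mul])
  rw [← mul_eq_zero_iff_exists_eq_mul hker, Matrix.mul_sub, sub_eq_zero, Matrix.mul_assoc,
    Matrix.mul_assoc]
end
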